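/- arXiv:1705.08504 — 3 statements merged into one kernel-verified Lean document; each statement's English description precedes it below -/
import Mathlib

section
/- Let F : ℝ → ℝ be a monotone nondecreasing bounded function (an unnormalized cumulative distribution function). Suppose g : ℝ → ℝ is (ε, δ) gapped according to F with unique maximizer t*_g = argmax_{t ∈ ℝ} g(t), and suppose h : ℝ → ℝ satisfies sup_{t ∈ ℝ} |g(t) − h(t)| ≤ δ/2 and attains its supremum at some t*_h (i.e., h(t*_h) ≥ h(t) for all t). Then |F(t*_g) − F(t*_h)| ≤ ε. -/
/-- bound on the error of maximizers. If `g` is `(ε, δ)` gapped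
according to the unnormalized CDF `F`, and `h` is within `δ/2` of `g` uniformly,
then the maximizers of `g` and `h` are within `ε` as measured by `F`. -/
theorem stmt_3 (F : ℝ → ℝ) (hF_mono : Monotone F) (hF_bdd : ∃ M, ∀ t, |F t| ≤ M)
    (ε δ : ℝ) (g h : ℝ → ℝ)
    (tg : ℝ) (hg_max : ∀ t, g t ≤ g tg)
    (hg_uniq : ∀ t, g t = g tg → t = tg)
    (hg_gap : ∀ t, |F t - F tg| > ε → g tg > g t + δ)
    (hgh : ∀ t, |g t - h t| ≤ δ / 2)
    (th : ℝ) (hh_max : ∀ t, h t ≤ h th) :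
    |F tg - F th| ≤ ε := by
  by_contra hc
  push_neg at hc
  have hgap := hg_gap th (by rw [abs_sub_comm]; exact hc)
  have h1 := hgh tg
  have h2 := hgh th
  have h3 := hh_max tg
  rw [abs_le] at h1 h2
  linarith [h1.1, h1.2, h2.1, h2.2]
end

section
/- Let m ≥ 1 be an integer, let Y be a finite set with |Y| = m, let γ ∈ (0,1], 0 < ε < γ, and n ≥ 3. For each s ∈ {+1, −1} and y ∈ Y, let g_{s,y}, ĝ_{s,y} : ℝ → [0,1] and h_s, h̃_s : ℝ → ℝ be functions such that for all t ∈ ℝ: h_s(t) ≥ γ, h̃_s(t) ≥ γ − ε, |h_s(t) − h̃_s(t)| ≤ ε, and |g_{s,y}(t) − ĝ_{s,y}(t)| ≤ ε + 4·(log n)/√n. Define G(t) = −√( Σ_{s ∈ {±1}} Σ_{y ∈ Y} g_{s,y}(t)² / h_s(t) ) and Ĝ(t) = −√( Σ_{s ∈ {±1}} Σ_{y ∈ Y} ĝ_{s,y}(t)² / h̃_s(t) ). Then sup_{t ∈ ℝ} |G(t) − Ĝ(t)| ≤ 4mε/(γ − ε)^{3/2} + 8m·(log n)/(√γ·√n).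 -/
open Finset

private lemma sqrt_sum_le {ι : Type*} (s : Finset ι) (a b : ι → ℝ) (d : ℝ)
    (ha : ∀ i ∈ s, 0 ≤ a i) (hb : ∀ i ∈ s, 0 ≤ b i) (hd : 0 ≤ d)
    (hab : ∀ i ∈ s, Real.sqrt (a i) ≤ Real.sqrt (b i) + d) :
    Real.sqrt (∑ i ∈ s, a i) ≤ Real.sqrt (∑ i ∈ s, b i) + s.card * d := by
  have hbs : (0:ℝ) ≤ ∑ i ∈ s, b i := Finset.sum_nonneg hb
  have hR : (0:ℝ) ≤ Real.sqrt (∑ i ∈ s, b i) + s.card * d := by positivity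
  have key : ∑ i ∈ s, a i ≤ (Real.sqrt (∑ i ∈ s, b i) + s.card * d)^2 := by
    have h1 : ∀ i ∈ s, a i ≤ b i + 2 * Real.sqrt (b i) * d + d^2 := by
      intro i hi
      have h := hab i hi
      nlinarith [Real.sq_sqrt (ha i hi), Real.sq_sqrt (hb i hi),
        Real.sqrt_nonneg (a i), Real.sqrt_nonneg (b i)]
    have h2 : ∑ i ∈ s, a i ≤ ∑ i ∈ s, (b i + 2 * Real.sqrt (b i) * d + d^2) :=
      Finset.sum_le_sum h1
    have h4 : ∑ i ∈ s, Real.sqrt (b i) ≤ s.card * Real.sqrt (∑ j ∈ s, b j) := by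
      calc ∑ i ∈ s, Real.sqrt (b i)
          ≤ ∑ i ∈ s, Real.sqrt (∑ j ∈ s, b j) :=
            Finset.sum_le_sum (fun i hi =>
              Real.sqrt_le_sqrt (Finset.single_le_sum hb hi))
        _ = s.card * Real.sqrt (∑ j ∈ s, b j) := by
            rw [Finset.sum_const, nsmul_eq_mul]
    have h5 : ∑ i ∈ s, (b i + 2 * Real.sqrt (b i) * d + d^2)
        = (∑ i ∈ s, b i) + 2 * (∑ i ∈ s, Real.sqrt (b i)) * d + s.card * d^2 := by
      rw [Finset.sum_add_distrib, Finset.sum_add_distrib, Finset.sum_const, nsmul_eq_mul,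
        ← Finset.sum_mul, Finset.mul_sum]
    rw [h5] at h2
    have hcard1 : (s.card : ℝ) ≤ (s.card : ℝ)^2 := by
      have : s.card ≤ s.card ^ 2 := Nat.le_self_pow two_ne_zero _
      exact_mod_cast this
    have hsq : (0:ℝ) ≤ Real.sqrt (∑ j ∈ s, b j) := Real.sqrt_nonneg _
    have hcard : (0:ℝ) ≤ (s.card : ℝ) := Nat.cast_nonneg _
    nlinarith [Real.sq_sqrt hbs, mul_nonneg (mul_nonneg hcard hd) hd,
      mul_le_mul_of_nonneg_right h4 hd, sq_nonneg d]
  calc Real.sqrt (∑ i ∈ s, a i)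
      ≤ Real.sqrt ((Real.sqrt (∑ i ∈ s, b i) + s.card * d)^2) := Real.sqrt_le_sqrt key
    _ = _ := Real.sqrt_sq hR

private lemma term_bound (γ ε L u v H H' : ℝ) (hγ0 : 0 < γ) (hγ1 : γ ≤ 1)
    (hε0 : 0 < ε) (hεγ : ε < γ) (hL : 0 ≤ L)
    (hu0 : 0 ≤ u) (hu1 : u ≤ 1) (hv0 : 0 ≤ v) (hv1 : v ≤ 1)
    (hH : γ ≤ H) (hH' : γ - ε ≤ H') (hclose : |H - H'| ≤ ε) (huv : |u - v| ≤ ε + L) :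
    |Real.sqrt (u^2/H) - Real.sqrt (v^2/H')|
      ≤ (ε + L)/Real.sqrt γ + ε/((γ-ε)*Real.sqrt (γ-ε)) := by
  have hH0 : 0 < H := lt_of_lt_of_le hγ0 hH
  have hH'0 : 0 < H' := by linarith
  have hβ0 : 0 < Real.sqrt (γ - ε) := Real.sqrt_pos.mpr (by linarith)
  have hsγ0 : 0 < Real.sqrt γ := Real.sqrt_pos.mpr hγ0
  set sH := Real.sqrt H with hsH_def
  set sH' := Real.sqrt H' with hsH'_def
  have hsH0 : 0 < sH := Real.sqrt_pos.mpr hH0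
  have hsH'0 : 0 < sH' := Real.sqrt_pos.mpr hH'0
  have hsHγ : Real.sqrt γ ≤ sH := Real.sqrt_le_sqrt hH
  have hsH'β : Real.sqrt (γ - ε) ≤ sH' := Real.sqrt_le_sqrt hH'
  have hsHβ : Real.sqrt (γ - ε) ≤ sH :=
    le_trans (Real.sqrt_le_sqrt (by linarith)) hsHγ
  have hβsq : Real.sqrt (γ - ε) * Real.sqrt (γ - ε) = γ - ε :=
    Real.mul_self_sqrt (by linarith)
  have e1 : Real.sqrt (u^2/H) = u / sH := by
    rw [Real.sqrt_div (sq_nonneg u), Real.sqrt_sq hu0]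
  have e2 : Real.sqrt (v^2/H') = v / sH' := by
    rw [Real.sqrt_div (sq_nonneg v), Real.sqrt_sq hv0]
  rw [e1, e2]
  have decomp : u / sH - v / sH' = (u - v)/sH + v*(sH' - sH)/(sH*sH') := by
    field_simp
    ring
  have habs1 : |(u - v)/sH| ≤ (ε + L)/Real.sqrt γ := by
    rw [abs_div, abs_of_pos hsH0]
    exact div_le_div₀ (by linarith) huv hsγ0 hsHγ
  have hΔ : |sH - sH'| ≤ ε / Real.sqrt (γ - ε) := by
    rw [le_div_iff₀ hβ0]
    have hid : (sH - sH')*(sH + sH') = H - H' := by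
      have h1 : sH * sH = H := Real.mul_self_sqrt hH0.le
      have h2 : sH' * sH' = H' := Real.mul_self_sqrt hH'0.le
      nlinarith
    calc |sH - sH'| * Real.sqrt (γ - ε)
        ≤ |sH - sH'| * (sH + sH') := by
          apply mul_le_mul_of_nonneg_left _ (abs_nonneg _)
          linarith
      _ = |H - H'| := by
          rw [← hid, abs_mul, abs_of_pos (by linarith : (0:ℝ) < sH + sH')]
      _ ≤ ε := hclose
  have habs3 : |v*(sH' - sH)/(sH*sH')| ≤ ε/((γ-ε)*Real.sqrt (γ-ε)) := by
    have heq : ε/((γ-ε)*Real.sqrt (γ-ε)) = (ε / Real.sqrt (γ - ε))/(γ - ε) := by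
      field_simp
    have hnum : |v| * |sH' - sH| ≤ ε / Real.sqrt (γ - ε) := by
      have h1 : |v| ≤ 1 := by rw [abs_of_nonneg hv0]; exact hv1
      have h2 : |sH' - sH| ≤ ε / Real.sqrt (γ - ε) := by rw [abs_sub_comm]; exact hΔ
      calc |v| * |sH' - sH| ≤ 1 * (ε / Real.sqrt (γ - ε)) :=
            mul_le_mul h1 h2 (abs_nonneg _) zero_le_one
        _ = ε / Real.sqrt (γ - ε) := one_mul _
    have hdenom : γ - ε ≤ sH * sH' := by
      calc γ - ε = Real.sqrt (γ - ε) * Real.sqrt (γ - ε) := hβsq.symm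
        _ ≤ sH * sH' := mul_le_mul hsHβ hsH'β hβ0.le hsH0.le
    rw [heq, abs_div, abs_mul, abs_of_pos (mul_pos hsH0 hsH'0)]
    exact div_le_div₀ (by positivity) hnum (by linarith) hdenom
  calc |u / sH - v / sH'| = |(u - v)/sH + v*(sH' - sH)/(sH*sH')| := by rw [decomp]
    _ ≤ |(u - v)/sH| + |v*(sH' - sH)/(sH*sH')| := abs_add_le _ _
    _ ≤ _ := add_le_add habs1 habs3

/-- uniform bound between the exact and estimated gain functions. -/
theorem stmt_7 (m : ℕ) (hm : 1 ≤ m) (Y : Type*) [Fintype Y] (hY : Fintype.card Y = m)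
    (γ ε : ℝ) (hγ0 : 0 < γ) (hγ1 : γ ≤ 1) (hε0 : 0 < ε) (hεγ : ε < γ)
    (n : ℕ) (hn : 3 ≤ n)
    (g ghat : ℤ → Y → ℝ → ℝ) (h htilde : ℤ → ℝ → ℝ)
    (hg_range : ∀ s ∈ ({1, -1} : Finset ℤ), ∀ y t, g s y t ∈ Set.Icc (0:ℝ) 1)
    (hghat_range : ∀ s ∈ ({1, -1} : Finset ℤ), ∀ y t, ghat s y t ∈ Set.Icc (0:ℝ) 1)
    (hh : ∀ s ∈ ({1, -1} : Finset ℤ), ∀ t, γ ≤ h s t)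
    (hhtilde : ∀ s ∈ ({1, -1} : Finset ℤ), ∀ t, γ - ε ≤ htilde s t)
    (hh_close : ∀ s ∈ ({1, -1} : Finset ℤ), ∀ t, |h s t - htilde s t| ≤ ε)
    (hg_close : ∀ s ∈ ({1, -1} : Finset ℤ), ∀ y t,
      |g s y t - ghat s y t| ≤ ε + 4 * Real.log n / Real.sqrt n)
    (G Ghat : ℝ → ℝ)
    (hG : ∀ t, G t
      = -Real.sqrt (∑ s ∈ ({1, -1} : Finset ℤ), ∑ y : Y, g s y t ^ 2 / h s t))
    (hGhat : ∀ t, Ghat t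
      = -Real.sqrt (∑ s ∈ ({1, -1} : Finset ℤ), ∑ y : Y, ghat s y t ^ 2 / htilde s t)) :
    ∀ t, |G t - Ghat t|
      ≤ 4 * m * ε / (γ - ε) ^ ((3:ℝ)/2)
        + 8 * m * Real.log n / (Real.sqrt γ * Real.sqrt n) := by
  intro t
  set L : ℝ := 4 * Real.log n / Real.sqrt n with hLdef
  have hn1 : (1:ℝ) ≤ (n:ℝ) := by exact_mod_cast Nat.one_le_of_lt hn
  have hlog : 0 ≤ Real.log n := Real.log_nonneg hn1
  have hsn : 0 < Real.sqrt n := Real.sqrt_pos.mpr (by linarith)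
  have hL : 0 ≤ L := by positivity
  have hγε : (0:ℝ) < γ - ε := by linarith
  set δ : ℝ := (ε + L)/Real.sqrt γ + ε/((γ-ε)*Real.sqrt (γ-ε)) with hδdef
  have hβ0 : 0 < Real.sqrt (γ - ε) := Real.sqrt_pos.mpr (by linarith)
  have hsγ0 : 0 < Real.sqrt γ := Real.sqrt_pos.mpr hγ0
  have hδ0 : 0 ≤ δ := by rw [hδdef]; positivity
  set P : Finset (ℤ × Y) := ({1, -1} : Finset ℤ) ×ˢ (Finset.univ : Finset Y) with hPdef
  have hcardN : P.card = 2 * m := by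
    rw [hPdef, Finset.card_product, Finset.card_univ, hY,
      show ({1, -1} : Finset ℤ) = insert 1 {-1} from rfl,
      Finset.card_insert_of_notMem (by norm_num), Finset.card_singleton]
  have hcardP : (P.card : ℝ) = 2 * m := by rw [hcardN]; push_cast; ring
  set a : ℤ × Y → ℝ := fun p => g p.1 p.2 t ^ 2 / h p.1 t with hadef
  set b : ℤ × Y → ℝ := fun p => ghat p.1 p.2 t ^ 2 / htilde p.1 t with hbdef
  have hmem : ∀ p ∈ P, p.1 ∈ ({1, -1} : Finset ℤ) := by
    intro p hp
    exact (Finset.mem_product.mp hp).1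
  have ha0 : ∀ p ∈ P, 0 ≤ a p := by
    intro p hp
    have := hh p.1 (hmem p hp) t
    have hH0 : 0 < h p.1 t := lt_of_lt_of_le hγ0 this
    positivity
  have hb0 : ∀ p ∈ P, 0 ≤ b p := by
    intro p hp
    have := hhtilde p.1 (hmem p hp) t
    have hH0 : 0 < htilde p.1 t := by linarith
    positivity
  have hterm : ∀ p ∈ P, |Real.sqrt (a p) - Real.sqrt (b p)| ≤ δ := by
    intro p hp
    have hs := hmem p hp
    obtain ⟨hu0, hu1⟩ := hg_range p.1 hs p.2 t
    obtain ⟨hv0, hv1⟩ := hghat_range p.1 hs p.2 t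
    exact term_bound γ ε L (g p.1 p.2 t) (ghat p.1 p.2 t) (h p.1 t) (htilde p.1 t)
      hγ0 hγ1 hε0 hεγ hL hu0 hu1 hv0 hv1 (hh p.1 hs t) (hhtilde p.1 hs t)
      (hh_close p.1 hs t) (hg_close p.1 hs p.2 t)
  have hGt : G t = -Real.sqrt (∑ p ∈ P, a p) := by
    rw [hG t, hPdef, Finset.sum_product]
  have hGhatt : Ghat t = -Real.sqrt (∑ p ∈ P, b p) := by
    rw [hGhat t, hPdef, Finset.sum_product]
  have hmain : |G t - Ghat t| ≤ P.card * δ := by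
    rw [hGt, hGhatt, abs_sub_le_iff]
    constructor
    · have := sqrt_sum_le P b a δ hb0 ha0 hδ0 (fun i hi => by
        have := hterm i hi
        rw [abs_sub_le_iff] at this
        linarith [this.2])
      linarith
    · have := sqrt_sum_le P a b δ ha0 hb0 hδ0 (fun i hi => by
        have := hterm i hi
        rw [abs_sub_le_iff] at this
        linarith [this.1])
      linarith
  rw [hcardP] at hmain
  refine le_trans hmain ?_
  -- final arithmetic
  have hrpow : (γ - ε) ^ ((3:ℝ)/2) = (γ - ε) * Real.sqrt (γ - ε) := by
    have hpos : (0:ℝ) < γ - ε := by linarith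
    rw [show ((3:ℝ)/2) = 1 + 1/2 by norm_num, Real.rpow_add hpos, Real.rpow_one,
      Real.sqrt_eq_rpow]
  have hm0 : (0:ℝ) ≤ (m:ℝ) := Nat.cast_nonneg _
  have hkey : (γ - ε) * Real.sqrt (γ - ε) ≤ Real.sqrt γ := by
    calc (γ - ε) * Real.sqrt (γ - ε) ≤ 1 * Real.sqrt (γ - ε) := by
          apply mul_le_mul_of_nonneg_right _ hβ0.le
          linarith
      _ = Real.sqrt (γ - ε) := one_mul _
      _ ≤ Real.sqrt γ := Real.sqrt_le_sqrt (by linarith)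
  have h1 : 2*(m:ℝ) * δ
      = 2*m*ε/Real.sqrt γ + 8*m*Real.log n/(Real.sqrt γ * Real.sqrt n)
        + 2*m*(ε/((γ-ε)*Real.sqrt (γ-ε))) := by
    rw [hδdef, hLdef]
    field_simp
    ring
  have h2 : 2*(m:ℝ)*ε/Real.sqrt γ ≤ 2*m*(ε/((γ-ε)*Real.sqrt (γ-ε))) := by
    rw [mul_div_assoc]
    apply mul_le_mul_of_nonneg_left _ (by positivity : (0:ℝ) ≤ 2*(m:ℝ))
    exact div_le_div_of_nonneg_left hε0.le (by positivity) hkey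
  rw [hrpow]
  have h3 : 4*(m:ℝ)*ε/((γ-ε)*Real.sqrt (γ-ε)) = 4*m*(ε/((γ-ε)*Real.sqrt (γ-ε))) := by
    rw [mul_div_assoc]
  rw [h3]
  linarith [h1, h2]
end

section
/- Let X ⊆ ℝ^d, let p and p̃ be unnormalized probability density functions on X satisfying ‖p − p̃‖₁ ≤ ε. Fix i ∈ {1,…,d}, and let F_i(t) = ∫ 1[x_i ≤ t]·p(x) dx be the unnormalized marginal cumulative distribution function of p along dimension i. Let G, Ĝ : ℝ → ℝ be functions such that sup_{t ∈ ℝ} |G(t) − Ĝ(t)| ≤ δ''/2, G is (ε'', δ'') gapped according to F_i with unique maximizer t* = argmax_{t ∈ ℝ} G(t), and Ĝ attains its supremum at some t̃* (i.e., Ĝ(t̃*) ≥ Ĝ(t) for all t). Then ∫ |p(x)·1[x_i ≤ t*] − p̃(x)·1[x_i ≤ t̃*]| dx ≤ ε + ε''. -/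
open MeasureTheory

/-- combining the gap property of the gain `G` with the uniform bound
`|G − Ĝ| ≤ δ''/2` yields an `L¹` bound `ε + ε''` between the truncated densities. -/
theorem stmt_8 (d : ℕ) (X : Set (Fin d → ℝ)) (hX : MeasurableSet X)
    (p ptilde : (Fin d → ℝ) → ℝ)
    (hp_meas : Measurable p) (hptilde_meas : Measurable ptilde)
    (hp_nn : ∀ x ∈ X, 0 ≤ p x) (hptilde_nn : ∀ x ∈ X, 0 ≤ ptilde x)
    (hp_int : IntegrableOn p X) (hptilde_int : IntegrableOn ptilde X)
    (ε : ℝ) (hL1 : ∫ x in X, |p x - ptilde x| ≤ ε)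
    (i : Fin d) (Fi : ℝ → ℝ)
    (hFi : ∀ u, Fi u = ∫ x in X, (if x i ≤ u then (1:ℝ) else 0) * p x)
    (G Ghat : ℝ → ℝ) (ε'' δ'' : ℝ)
    (hGGhat : ∀ t, |G t - Ghat t| ≤ δ'' / 2)
    (tstar : ℝ) (hG_max : ∀ t, G t ≤ G tstar)
    (hG_uniq : ∀ t, G t = G tstar → t = tstar)
    (hG_gap : ∀ t, |Fi t - Fi tstar| > ε'' → G tstar > G t + δ'')
    (ttilde : ℝ) (hGhat_max : ∀ t, Ghat t ≤ Ghat ttilde) :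
    ∫ x in X, |p x * (if x i ≤ tstar then (1:ℝ) else 0)
      - ptilde x * (if x i ≤ ttilde then (1:ℝ) else 0)| ≤ ε + ε'' := by
  -- Step 1: |Fi ttilde - Fi tstar| ≤ ε''
  have hF : |Fi ttilde - Fi tstar| ≤ ε'' := by
    by_contra h
    push_neg at h
    have hgap := hG_gap ttilde h
    have h1 := abs_le.1 (hGGhat tstar)
    have h2 := abs_le.1 (hGGhat ttilde)
    have h3 := hGhat_max tstar
    linarith [h1.1, h2.2]
  set a := min tstar ttilde with ha
  set b := max tstar ttilde with hb
  -- integrability of truncated densities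
  have hmeas : ∀ u : ℝ, Measurable (fun x : Fin d → ℝ => (if x i ≤ u then (1:ℝ) else 0)) := by
    intro u
    exact Measurable.ite (measurableSet_le (measurable_pi_apply i) measurable_const)
      measurable_const measurable_const
  have hint : ∀ u : ℝ, IntegrableOn (fun x => (if x i ≤ u then (1:ℝ) else 0) * p x) X := by
    intro u
    refine Integrable.mono hp_int ((hmeas u).mul hp_meas).aestronglyMeasurable ?_
    filter_upwards with x
    simp only [norm_mul, Real.norm_eq_abs]
    by_cases h : x i ≤ u <;> simp [h]
  have hintt : ∀ u : ℝ, IntegrableOn (fun x => ptilde x * (if x i ≤ u then (1:ℝ) else 0)) X := by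
    intro u
    refine Integrable.mono hptilde_int (hptilde_meas.mul (hmeas u)).aestronglyMeasurable ?_
    filter_upwards with x
    simp only [norm_mul, Real.norm_eq_abs]
    by_cases h : x i ≤ u <;> simp [h]
  have hintp : ∀ u : ℝ, IntegrableOn (fun x => p x * (if x i ≤ u then (1:ℝ) else 0)) X := by
    intro u
    refine Integrable.mono hp_int (hp_meas.mul (hmeas u)).aestronglyMeasurable ?_
    filter_upwards with x
    simp only [norm_mul, Real.norm_eq_abs]
    by_cases h : x i ≤ u <;> simp [h]
  -- pointwise bound
  have hpw : ∀ x ∈ X,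
      |p x * (if x i ≤ tstar then (1:ℝ) else 0) - ptilde x * (if x i ≤ ttilde then (1:ℝ) else 0)|
      ≤ |p x - ptilde x| + ((if x i ≤ b then (1:ℝ) else 0) * p x
          - (if x i ≤ a then (1:ℝ) else 0) * p x) := by
    intro x hx
    have hpnn := hp_nn x hx
    have hptnn := hptilde_nn x hx
    have hab1 : (x i ≤ a) ↔ (x i ≤ tstar ∧ x i ≤ ttilde) := le_min_iff
    have hab2 : (x i ≤ b) ↔ (x i ≤ tstar ∨ x i ≤ ttilde) := le_max_iff
    by_cases h1 : x i ≤ tstar <;> by_cases h2 : x i ≤ ttilde <;>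
      simp only [h1, h2, hab1, hab2, if_true, if_false, and_self, or_self,
        true_and, and_true, false_and, and_false, true_or, or_true, false_or, or_false,
        if_pos, if_neg, not_false_iff] <;>
      rw [abs_le] <;> constructor <;>
      cases abs_cases (p x - ptilde x) <;> (try push_neg at *) <;> nlinarith
  -- the RHS is integrable
  have hrhs_int : IntegrableOn (fun x => |p x - ptilde x| + ((if x i ≤ b then (1:ℝ) else 0) * p x
          - (if x i ≤ a then (1:ℝ) else 0) * p x)) X :=
    ((hp_int.sub hptilde_int).abs).add ((hint b).sub (hint a))
  have hlhs_int : IntegrableOn (fun x =>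
      |p x * (if x i ≤ tstar then (1:ℝ) else 0) - ptilde x * (if x i ≤ ttilde then (1:ℝ) else 0)|) X :=
    ((hintp tstar).sub (hintt ttilde)).abs
  calc ∫ x in X, |p x * (if x i ≤ tstar then (1:ℝ) else 0)
      - ptilde x * (if x i ≤ ttilde then (1:ℝ) else 0)|
      ≤ ∫ x in X, (|p x - ptilde x| + ((if x i ≤ b then (1:ℝ) else 0) * p x
          - (if x i ≤ a then (1:ℝ) else 0) * p x)) :=
        setIntegral_mono_on hlhs_int hrhs_int hX hpw
    _ = (∫ x in X, |p x - ptilde x|) + ((∫ x in X, (if x i ≤ b then (1:ℝ) else 0) * p x)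
          - (∫ x in X, (if x i ≤ a then (1:ℝ) else 0) * p x)) := by
        have hI1 : IntegrableOn (fun x => |p x - ptilde x|) X := (hp_int.sub hptilde_int).abs
        have hI2 : IntegrableOn (fun x => (if x i ≤ b then (1:ℝ) else 0) * p x
            - (if x i ≤ a then (1:ℝ) else 0) * p x) X := (hint b).sub (hint a)
        rw [integral_add hI1 hI2, integral_sub (hint b) (hint a)]
    _ = (∫ x in X, |p x - ptilde x|) + (Fi b - Fi a) := by rw [hFi b, hFi a]
    _ ≤ ε + ε'' := by
        have : Fi b - Fi a ≤ ε'' := by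
          rcases le_total tstar ttilde with h | h
          · rw [hb, ha, max_eq_right h, min_eq_left h]
            calc Fi ttilde - Fi tstar ≤ |Fi ttilde - Fi tstar| := le_abs_self _
              _ ≤ ε'' := hF
          · rw [hb, ha, max_eq_left h, min_eq_right h]
            calc Fi tstar - Fi ttilde ≤ |Fi ttilde - Fi tstar| := by
                  rw [abs_sub_comm]; exact le_abs_self _
              _ ≤ ε'' := hF
        linarith
end
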